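/- arXiv:0903.3101 — 8 statements merged into one kernel-verified Lean document; each statement's English description precedes it below -/
import Mathlib

section
/- Let x₁, …, x_n be pairwise distinct real numbers and let (c₁, s₁), …, (c_n, s_n) be points of the unit circle in ℝ² (so cᵢ² + sᵢ² = 1 for each i). Then there exist real polynomials p, q, s such that s(x) ≠ 0 for every real x, p(x)² + q(x)² = s(x)² for every real x, and for each i one has p(xᵢ) = cᵢ·s(xᵢ) and q(xᵢ) = sᵢ·s(xᵢ). (Equivalently: there is a rational map from ℝ to the unit circle, given by quotients of polynomials whose common denominator has no real zero, taking prescribed circle values at the finitely many prescribed points.) -/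
/-! Rotate the circle so that none of the prescribed values sits at the pole `(-1, 0)`
of the rational parametrization `t ↦ ((1 - t²) / (1 + t²), 2t / (1 + t²))`; each rotated
value then has a real parameter `tᵢ`, and composing the parametrization with a Lagrange
interpolant `r` of the `tᵢ` gives the polynomials, with denominator `1 + r²` free of real
zeros. -/

open Polynomial

lemma circle_param_sq_add_sq {a b : ℝ} (hab : a ^ 2 + b ^ 2 = 1) (t : ℝ) :
    (a * (1 - t ^ 2) - b * (2 * t)) ^ 2 + (b * (1 - t ^ 2) + a * (2 * t)) ^ 2
      = (1 + t ^ 2) ^ 2 := by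
  linear_combination (1 + t ^ 2) ^ 2 * hab

lemma half_angle_param {C S : ℝ} (hCS : C ^ 2 + S ^ 2 = 1) (hC : 1 + C ≠ 0) :
    1 - (S / (1 + C)) ^ 2 = C * (1 + (S / (1 + C)) ^ 2) ∧
      2 * (S / (1 + C)) = S * (1 + (S / (1 + C)) ^ 2) := by
  constructor
  · field_simp
    linear_combination (-(1 + C)) * hCS
  · field_simp
    linear_combination (-S) * hCS

/-- The parametrization rotated by `(a, b)` hits every unit-circle point except `(-a, -b)`. -/
lemma exists_rotated_circle_param {a b c s : ℝ} (hab : a ^ 2 + b ^ 2 = 1)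
    (hcs : c ^ 2 + s ^ 2 = 1) (hne : a * c + b * s ≠ -1) :
    ∃ t : ℝ, a * (1 - t ^ 2) - b * (2 * t) = c * (1 + t ^ 2) ∧
      b * (1 - t ^ 2) + a * (2 * t) = s * (1 + t ^ 2) := by
  have hCS : (a * c + b * s) ^ 2 + (a * s - b * c) ^ 2 = 1 := by
    linear_combination (c ^ 2 + s ^ 2) * hab + hcs
  have hC : 1 + (a * c + b * s) ≠ 0 := fun h => hne (by linarith)
  obtain ⟨h₁, h₂⟩ := half_angle_param hCS hC
  set t := (a * s - b * c) / (1 + (a * c + b * s))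
  exact ⟨t, by linear_combination a * h₁ - b * h₂ + c * (1 + t ^ 2) * hab,
    by linear_combination b * h₁ + a * h₂ + s * (1 + t ^ 2) * hab⟩

lemma inner_ne_neg_one_of_ne_neg {a b c s : ℝ} (hab : a ^ 2 + b ^ 2 = 1)
    (hcs : c ^ 2 + s ^ 2 = 1) (ha : a ≠ -c) : a * c + b * s ≠ -1 := by
  intro h
  have : (a + c) ^ 2 + (b + s) ^ 2 = 0 := by linear_combination hab + hcs + 2 * h
  exact ha (by nlinarith [sq_nonneg (a + c), sq_nonneg (b + s)])

lemma exists_unit_inner_ne_neg_one {ι : Type*} [Finite ι] (c s : ι → ℝ)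
    (hcs : ∀ i, c i ^ 2 + s i ^ 2 = 1) :
    ∃ a b : ℝ, a ^ 2 + b ^ 2 = 1 ∧ ∀ i, a * c i + b * s i ≠ -1 := by
  obtain ⟨a, ⟨ha₁, ha₂⟩, ha⟩ :=
    (Set.Icc_infinite (neg_one_lt_zero.trans one_pos)).exists_notMem_finite
      (Set.finite_range fun i => -c i)
  have hab : a ^ 2 + √(1 - a ^ 2) ^ 2 = 1 := by
    rw [Real.sq_sqrt (by nlinarith)]
    ring
  exact ⟨a, √(1 - a ^ 2), hab, fun i =>
    inner_ne_neg_one_of_ne_neg hab (hcs i) fun h => ha ⟨i, h.symm⟩⟩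

/-- Circle-valued polynomial interpolation: given distinct real points `x i` and
prescribed unit-circle values `(c i, s i)`, there are real polynomials `p, q, d`
with `d` nowhere vanishing on `ℝ`, `p² + q² = d²` pointwise on `ℝ`, and
`p(xᵢ) = cᵢ·d(xᵢ)`, `q(xᵢ) = sᵢ·d(xᵢ)` for each `i`. -/
theorem circle_interpolation (n : ℕ) (x c s : Fin n → ℝ)
    (hx : Function.Injective x)
    (hcs : ∀ i, c i ^ 2 + s i ^ 2 = 1) :
    ∃ p q d : Polynomial ℝ,
      (∀ t : ℝ, d.eval t ≠ 0) ∧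
      (∀ t : ℝ, p.eval t ^ 2 + q.eval t ^ 2 = d.eval t ^ 2) ∧
      (∀ i, p.eval (x i) = c i * d.eval (x i) ∧ q.eval (x i) = s i * d.eval (x i)) := by
  obtain ⟨a, b, hab, hne⟩ := exists_unit_inner_ne_neg_one c s hcs
  choose t ht using fun i => exists_rotated_circle_param hab (hcs i) (hne i)
  set r := Lagrange.interpolate Finset.univ x t
  have hr : ∀ i, r.eval (x i) = t i := fun i =>
    Lagrange.eval_interpolate_at_node _ hx.injOn (Finset.mem_univ i)
  refine ⟨C a * (1 - r ^ 2) - C b * (2 * r), C b * (1 - r ^ 2) + C a * (2 * r), 1 + r ^ 2,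
    fun u => ?_, fun u => ?_, fun i => ?_⟩
  · simp only [eval_add, eval_one, eval_pow]
    positivity
  · simpa using circle_param_sq_add_sq hab (r.eval u)
  · simpa [hr] using ht i
end

section
/- Let Q be a real polynomial. Let p₁ = (x₁, y₁, z₁), …, p_n = (x_n, y_n, z_n) and q₁ = (x₁, v₁, w₁), …, q_n = (x_n, v_n, w_n) be points of S_Q such that x₁, …, x_n are pairwise distinct, and let b₁, …, b_m be real numbers with b_j ≠ x_i for all i and j. Then there exists a twisting map α of S_Q such that α(p_i) = q_i for every i and α fixes pointwise every fiber {(x, y, z) ∈ S_Q | x = b_j}, j = 1, …, m. -/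
/-- The affine surface `y² + z² = Q(x)` in `ℝ³`. -/
def SQ (Q : Polynomial ℝ) : Set (ℝ × ℝ × ℝ) :=
  {v | v.2.1 ^ 2 + v.2.2 ^ 2 = Q.eval v.1}

/-- A twisting map of `ℝ³`: `(x,y,z) ↦ (x, f(x)y − g(x)z, g(x)y + f(x)z)` where
`f = p/d`, `g = q/d` for real polynomials `p, q, d` with `d` nowhere vanishing
and `p² + q² = d²` pointwise on `ℝ`. -/
def IsTwistingMap (α : ℝ × ℝ × ℝ → ℝ × ℝ × ℝ) : Prop :=
  ∃ p q d : Polynomial ℝ,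
    (∀ t : ℝ, d.eval t ≠ 0) ∧
    (∀ t : ℝ, p.eval t ^ 2 + q.eval t ^ 2 = d.eval t ^ 2) ∧
    ∀ v : ℝ × ℝ × ℝ,
      α v = (v.1,
        (p.eval v.1 / d.eval v.1) * v.2.1 - (q.eval v.1 / d.eval v.1) * v.2.2,
        (q.eval v.1 / d.eval v.1) * v.2.1 + (p.eval v.1 / d.eval v.1) * v.2.2)

/-! A twisting map acts on the fiber over `x` as multiplication of `y + z i` by the unit complex
number `(1 + R(x) i)⁴ / (1 + R(x)²)²`, for a real polynomial `R`. As `a` runs over `ℝ`, the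
argument `4 arctan a` of `(1 + a i)⁴` sweeps an interval of length `4π`, so every rotation arises
from some value `a`, and `a = 0` gives the identity. Since `(yᵢ, zᵢ)` and `(vᵢ, wᵢ)` both have
squared norm `Q(xᵢ)`, some `aᵢ` rotates one onto the other, and it remains to interpolate
`R(xᵢ) = aᵢ`, `R(bⱼ) = 0`. -/

open Polynomial Complex

noncomputable def twistRe : ℝ[X] := (1 - X ^ 2) ^ 2 - 4 * X ^ 2

noncomputable def twistIm : ℝ[X] := 4 * X * (1 - X ^ 2)

noncomputable def twistDen : ℝ[X] := (1 + X ^ 2) ^ 2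

lemma one_add_mul_I_pow_four (a : ℝ) :
    (1 + a * I) ^ 4 = twistRe.eval a + twistIm.eval a * I := by
  apply Complex.ext <;> simp [twistRe, twistIm, pow_succ] <;> ring

lemma twistRe_sq_add_twistIm_sq (a : ℝ) :
    twistRe.eval a ^ 2 + twistIm.eval a ^ 2 = twistDen.eval a ^ 2 := by
  simp only [twistRe, twistIm, twistDen, eval_sub, eval_add, eval_mul, eval_pow, eval_one, eval_X,
    eval_ofNat]
  ring

lemma twistDen_pos (a : ℝ) : 0 < twistDen.eval a := by
  simp only [twistDen, eval_add, eval_pow, eval_one, eval_X]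
  positivity

lemma exists_one_add_mul_I_pow_four_eq {z : ℂ} (hz : ‖z‖ = 1) :
    ∃ a : ℝ, (1 + a * I) ^ 4 = z * (1 + a ^ 2) ^ 2 := by
  set φ := arg z / 4 with hφ
  have hcos : 0 < Real.cos φ := by
    have := abs_le.1 (abs_arg_le_pi z)
    rw [hφ]
    exact Real.cos_pos_of_mem_Ioo ⟨by linarith [Real.pi_pos], by linarith [Real.pi_pos]⟩
  have hc : (Real.cos φ : ℂ) ≠ 0 := by exact_mod_cast hcos.ne'
  refine ⟨Real.tan φ, ?_⟩
  have hexp : (1 + Real.tan φ * I) * Real.cos φ = exp (φ * I) := by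
    rw [Real.tan_eq_sin_div_cos, exp_mul_I, ← ofReal_cos, ← ofReal_sin, ofReal_div]
    field_simp
  have hz' : exp (4 * (φ * I)) = z := by
    simpa [hz, φ, ← mul_assoc, mul_div_cancel₀] using norm_mul_exp_arg_mul_I z
  have hsec : (1 + Real.tan φ ^ 2) * Real.cos φ ^ 2 = 1 := by
    rw [Real.tan_eq_sin_div_cos]
    field_simp
    linear_combination Real.sin_sq_add_cos_sq φ
  apply mul_right_cancel₀ (pow_ne_zero 4 hc)
  calc (1 + Real.tan φ * I) ^ 4 * (Real.cos φ : ℂ) ^ 4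
      = exp (φ * I) ^ 4 := by rw [← hexp]; ring
    _ = z := by rw [← exp_nat_mul, ← hz']; push_cast; ring_nf
    _ = z * (((1 + Real.tan φ ^ 2) * Real.cos φ ^ 2 : ℝ) : ℂ) ^ 2 := by rw [hsec]; simp
    _ = z * (1 + (Real.tan φ : ℂ) ^ 2) ^ 2 * (Real.cos φ : ℂ) ^ 4 := by
      simp only [ofReal_mul, ofReal_add, ofReal_pow, ofReal_one]; ring

lemma exists_twist_rotation {y z v w : ℝ} (h : v ^ 2 + w ^ 2 = y ^ 2 + z ^ 2) :
    ∃ a : ℝ, twistRe.eval a * y - twistIm.eval a * z = twistDen.eval a * v ∧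
      twistIm.eval a * y + twistRe.eval a * z = twistDen.eval a * w := by
  set ζ : ℂ := y + z * I
  set ω : ℂ := v + w * I
  have hnorm : ‖ω‖ = ‖ζ‖ := by
    simp only [ζ, ω, norm_add_mul_I, h]
  obtain ⟨a, ha⟩ : ∃ a : ℝ, (1 + a * I) ^ 4 * ζ = twistDen.eval a * ω := by
    rcases eq_or_ne ζ 0 with hζ | hζ
    · refine ⟨0, ?_⟩
      rw [hζ, norm_zero, norm_eq_zero] at hnorm
      simp [hζ, hnorm]
    · obtain ⟨a, ha⟩ := exists_one_add_mul_I_pow_four_eq (z := ω / ζ) (by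
        rw [norm_div, hnorm, div_self (norm_ne_zero_iff.2 hζ)])
      refine ⟨a, ?_⟩
      rw [ha]
      simp only [twistDen, eval_pow, eval_add, eval_one, eval_X]
      push_cast
      field_simp
  rw [one_add_mul_I_pow_four] at ha
  simp only [ζ, ω, Complex.ext_iff, mul_re, mul_im, add_re, add_im, ofReal_re, ofReal_im,
    I_re, I_im] at ha
  obtain ⟨hre, him⟩ := ha
  exact ⟨a, by linear_combination hre, by linear_combination him⟩

lemma Polynomial.exists_eval_eq_and_eval_eq_zero {F ι κ : Type*} [Field F] [Fintype ι]
    [DecidableEq ι] [Fintype κ] {x : ι → F} (hx : Function.Injective x) (a : ι → F)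
    (b : κ → F) (hb : ∀ i j, b j ≠ x i) :
    ∃ R : F[X], (∀ i, R.eval (x i) = a i) ∧ ∀ j, R.eval (b j) = 0 := by
  -- the factor `∏ (X - bⱼ)` handles the `bⱼ`, which need not be distinct
  set B : F[X] := ∏ j, (X - C (b j))
  have hB : ∀ i, B.eval (x i) ≠ 0 := fun i => by
    simp only [B, eval_prod, eval_sub, eval_X, eval_C]
    exact Finset.prod_ne_zero_iff.2 fun j _ => sub_ne_zero.2 (hb i j).symm
  refine ⟨Lagrange.interpolate Finset.univ x (fun i => a i / B.eval (x i)) * B, fun i => ?_,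
    fun j => ?_⟩
  · rw [eval_mul, Lagrange.eval_interpolate_at_node _ hx.injOn (Finset.mem_univ i),
      div_mul_cancel₀ _ (hB i)]
  · rw [eval_mul, eval_prod, Finset.prod_eq_zero (Finset.mem_univ j) (by simp), mul_zero]

noncomputable def twist (R : ℝ[X]) (u : ℝ × ℝ × ℝ) : ℝ × ℝ × ℝ :=
  let c := (twistRe.comp R).eval u.1 / (twistDen.comp R).eval u.1
  let s := (twistIm.comp R).eval u.1 / (twistDen.comp R).eval u.1
  (u.1, c * u.2.1 - s * u.2.2, s * u.2.1 + c * u.2.2)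

lemma isTwistingMap_twist (R : ℝ[X]) : IsTwistingMap (twist R) :=
  ⟨twistRe.comp R, twistIm.comp R, twistDen.comp R,
    fun t => by simpa only [eval_comp] using (twistDen_pos _).ne',
    fun t => by simpa only [eval_comp] using twistRe_sq_add_twistIm_sq _, fun _ => rfl⟩

lemma twist_apply_of_eval_eq_zero {R : ℝ[X]} {u : ℝ × ℝ × ℝ} (hu : R.eval u.1 = 0) :
    twist R u = u := by
  simp [twist, twistRe, twistIm, twistDen, hu]

lemma twist_apply_of_eval_eq {R : ℝ[X]} {a x y z v w : ℝ} (hR : R.eval x = a)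
    (hre : twistRe.eval a * y - twistIm.eval a * z = twistDen.eval a * v)
    (him : twistIm.eval a * y + twistRe.eval a * z = twistDen.eval a * w) :
    twist R (x, y, z) = (x, v, w) := by
  have hd := (twistDen_pos a).ne'
  simp only [twist, eval_comp, hR, Prod.mk.injEq, true_and]
  constructor
  · field_simp; linear_combination hre
  · field_simp; linear_combination him

/-- Fiberwise very transitivity by twisting maps: given points `(xᵢ, yᵢ, zᵢ)` and
`(xᵢ, vᵢ, wᵢ)` of `S_Q` over pairwise distinct `xᵢ`, and base points `bⱼ` distinct
from all `xᵢ`, there is a twisting map sending each `pᵢ` to `qᵢ` and fixing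
pointwise each fiber over the `bⱼ`. -/
theorem twisting_map_transitive (Q : Polynomial ℝ) (n m : ℕ)
    (x y z v w : Fin n → ℝ) (b : Fin m → ℝ)
    (hx : Function.Injective x)
    (hp : ∀ i, (x i, y i, z i) ∈ SQ Q)
    (hq : ∀ i, (x i, v i, w i) ∈ SQ Q)
    (hb : ∀ i j, b j ≠ x i) :
    ∃ α : ℝ × ℝ × ℝ → ℝ × ℝ × ℝ, IsTwistingMap α ∧
      (∀ i, α (x i, y i, z i) = (x i, v i, w i)) ∧
      (∀ j, ∀ u ∈ SQ Q, u.1 = b j → α u = u) := by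
  have hrot : ∀ i, ∃ a : ℝ, twistRe.eval a * y i - twistIm.eval a * z i = twistDen.eval a * v i ∧
      twistIm.eval a * y i + twistRe.eval a * z i = twistDen.eval a * w i :=
    fun i => exists_twist_rotation ((hq i).trans (hp i).symm)
  choose a ha using hrot
  obtain ⟨R, hRx, hRb⟩ := exists_eval_eq_and_eval_eq_zero hx a b hb
  exact ⟨twist R, isTwistingMap_twist R, fun i => twist_apply_of_eval_eq (hRx i) (ha i).1 (ha i).2,
    fun j u _ hu => twist_apply_of_eval_eq_zero (hu ▸ hRb j)⟩
end

section
/- Let P and Q be real-rooted and squarefree real polynomials. If {x ∈ ℝ | P(x) ≥ 0} = {x ∈ ℝ | Q(x) ≥ 0}, then there exists a real number λ > 0 such that Q = λ·P. -/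
/-- A real polynomial which is nonconstant, has all of its complex roots real,
and has no repeated roots. -/
def RealRootedSquarefree (P : Polynomial ℝ) : Prop :=
  0 < P.natDegree ∧ Squarefree P ∧ ∀ z : ℂ, Polynomial.aeval z P = 0 → z.im = 0

/-!
Both polynomials split over `ℝ` with simple roots. A simple root `r` of `P` is never a local
minimum of `P`, since `P'(r) ≠ 0`; so if `Q(r) > 0`, the neighbourhood of `r` on which `Q > 0`,
and hence `P ≥ 0 = P(r)`, is impossible. Thus `P` and `Q` have the same roots, so `Q = l P`
with `l` the ratio of the leading coefficients, and `l < 0` would force `P ≥ 0 ↔ P ≤ 0`,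
i.e. `P = 0`.
-/

open Polynomial Filter Topology

namespace Polynomial

theorem splits_of_forall_aeval_eq_zero_im_eq_zero {P : ℝ[X]}
    (hP : ∀ z : ℂ, aeval z P = 0 → z.im = 0) : P.Splits :=
  Splits.of_splits_map (algebraMap ℝ ℂ) (IsAlgClosed.splits _) fun z hz ↦
    ⟨z.re, Complex.ext (by simp) (by simp [hP z (by simpa [aeval_def, eval_map] using
      (mem_roots'.mp hz).2)])⟩

theorem Separable.not_isLocalMin_eval {P : ℝ[X]} (hP : P.Separable) {r : ℝ}
    (hr : P.eval r = 0) : ¬IsLocalMin (fun x ↦ P.eval x) r := fun hmin ↦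
  hP.eval₂_derivative_ne_zero (RingHom.id ℝ) hr
    ((Polynomial.deriv ..).symm.trans hmin.deriv_eq_zero)

theorem eval_eq_zero_of_nonneg_set_eq {P Q : ℝ[X]} (hP : P.Separable)
    (h : {x : ℝ | 0 ≤ P.eval x} = {x : ℝ | 0 ≤ Q.eval x}) {r : ℝ} (hr : P.eval r = 0) :
    Q.eval r = 0 := by
  have hQr : 0 ≤ Q.eval r := h.le hr.ge
  refine hQr.eq_or_lt.elim Eq.symm fun hpos ↦ (hP.not_isLocalMin_eval hr ?_).elim
  filter_upwards [Q.continuous.continuousAt.eventually (eventually_gt_nhds hpos)] with x hx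
  rw [hr]
  exact h.ge hx.le

theorem Splits.eq_C_mul_of_roots_eq {K : Type*} [Field K] {P Q : K[X]} (hP : P.Splits)
    (hQ : Q.Splits) (hP0 : P ≠ 0) (h : P.roots = Q.roots) :
    Q = C (Q.leadingCoeff / P.leadingCoeff) * P := by
  calc Q = C Q.leadingCoeff * (P.roots.map (X - C ·)).prod := by rw [h, ← hQ.eq_prod_roots]
    _ = C (Q.leadingCoeff / P.leadingCoeff) *
          (C P.leadingCoeff * (P.roots.map (X - C ·)).prod) := by
      rw [← mul_assoc, ← C_mul, div_mul_cancel₀ _ (leadingCoeff_ne_zero.mpr hP0)]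
    _ = C (Q.leadingCoeff / P.leadingCoeff) * P := by rw [← hP.eq_prod_roots]

theorem pos_of_nonneg_set_eq_C_mul {P : ℝ[X]} (hP : P ≠ 0) {l : ℝ} (hl : l ≠ 0)
    (h : {x : ℝ | 0 ≤ P.eval x} = {x : ℝ | 0 ≤ (C l * P).eval x}) : 0 < l := by
  refine hl.lt_or_gt.resolve_left fun hneg ↦ hP (Polynomial.funext fun x ↦ ?_)
  have hx := Set.ext_iff.mp h x
  simp only [Set.mem_ofPred_eq, eval_mul, eval_C] at hx
  rw [eval_zero]
  rcases le_total 0 (P.eval x) with hle | hle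
  · nlinarith [hx.mp hle]
  · nlinarith [hx.mpr (mul_nonneg_of_nonpos_of_nonpos hneg.le hle)]

end Polynomial

/-- If two real-rooted squarefree real polynomials have the same nonnegativity set,
then they differ by a positive constant factor. -/
theorem eq_pos_smul_of_nonneg_set_eq (P Q : Polynomial ℝ)
    (hP : RealRootedSquarefree P) (hQ : RealRootedSquarefree Q)
    (h : {x : ℝ | 0 ≤ P.eval x} = {x : ℝ | 0 ≤ Q.eval x}) :
    ∃ l : ℝ, 0 < l ∧ Q = Polynomial.C l * P := by
  have hPsep : P.Separable := PerfectField.separable_iff_squarefree.mpr hP.2.1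
  have hQsep : Q.Separable := PerfectField.separable_iff_squarefree.mpr hQ.2.1
  have hroots : P.roots = Q.roots := by
    refine (Multiset.Nodup.ext (nodup_roots hPsep) (nodup_roots hQsep)).mpr fun r ↦ ?_
    rw [mem_roots hPsep.ne_zero, mem_roots hQsep.ne_zero]
    exact ⟨eval_eq_zero_of_nonneg_set_eq hPsep h, eval_eq_zero_of_nonneg_set_eq hQsep h.symm⟩
  have hQP := (splits_of_forall_aeval_eq_zero_im_eq_zero hP.2.2).eq_C_mul_of_roots_eq
    (splits_of_forall_aeval_eq_zero_im_eq_zero hQ.2.2) hPsep.ne_zero hroots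
  have hl : Q.leadingCoeff / P.leadingCoeff ≠ 0 :=
    div_ne_zero (leadingCoeff_ne_zero.mpr hQsep.ne_zero) (leadingCoeff_ne_zero.mpr hPsep.ne_zero)
  exact ⟨_, pos_of_nonneg_set_eq_C_mul hPsep.ne_zero hl (hQP ▸ h), hQP⟩
end

section
/- Let P and Q be real-rooted and squarefree real polynomials with {x ∈ ℝ | P(x) ≥ 0} = {x ∈ ℝ | Q(x) ≥ 0}. Then there exists a real number μ > 0 such that the map (x, y, z) ↦ (x, μy, μz) is a bijection from S_P onto S_Q (with inverse (x, y, z) ↦ (x, y/μ, z/μ)). -/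
/-!
A squarefree real polynomial changes sign at each of its real roots, so two squarefree
polynomials with the same nonnegativity set `{x | 0 ≤ P x}` have the same roots. If they are
moreover real-rooted, they split over `ℝ`, hence `Q = c • P` for a constant `c ≠ 0`; and `c > 0`,
since for `c < 0` the sets `{P ≥ 0}` and `{P ≤ 0}` would coincide, forcing `P = 0`. Scaling the fibre coordinates by `√c` then maps
`y² + z² = P(x)` onto `y² + z² = c P(x)`.
-/

open Polynomial Filter Topology

theorem Polynomial.splits_of_forall_aeval_complex_eq_zero_im_eq_zero {p : ℝ[X]}
    (h : ∀ z : ℂ, aeval z p = 0 → z.im = 0) : p.Splits := by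
  refine Splits.of_splits_map_of_injective (algebraMap ℝ ℂ).injective (IsAlgClosed.splits _)
    fun z hz => ⟨z.re, Complex.ext (by simp) ?_⟩
  have hz0 : aeval z p = 0 := by
    rw [aeval_def, ← eval_map]
    exact (mem_roots'.1 hz).2
  simp [h z hz0]

theorem Polynomial.exists_eq_X_sub_C_mul_eval_ne_zero {R : Type*} [CommRing R] [Nontrivial R]
    {p : R[X]} (hp : Squarefree p) {r : R} (hr : p.IsRoot r) :
    ∃ g : R[X], p = (X - C r) * g ∧ g.eval r ≠ 0 := by
  obtain ⟨g, rfl⟩ := dvd_iff_isRoot.2 hr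
  refine ⟨g, rfl, fun hg => not_isUnit_X_sub_C r (hp _ ?_)⟩
  exact mul_dvd_mul_left _ (dvd_iff_isRoot.2 hg)

theorem Polynomial.frequently_eval_neg_of_squarefree {p : ℝ[X]} (hp : Squarefree p) {r : ℝ}
    (hr : p.IsRoot r) : ∃ᶠ x in 𝓝 r, p.eval x < 0 := by
  obtain ⟨g, rfl, hg⟩ := exists_eq_X_sub_C_mul_eval_ne_zero hp hr
  simp only [eval_mul, eval_sub, eval_X, eval_C]
  have hsign : ∀ᶠ x in 𝓝 r, 0 < g.eval x * g.eval r :=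
    ((g.continuous.mul continuous_const).tendsto r).eventually (lt_mem_nhds (mul_self_pos.2 hg))
  rcases hg.lt_or_gt with hneg | hpos
  · refine (Eventually.frequently ?_ : ∃ᶠ x in 𝓝[>] r, _).filter_mono nhdsWithin_le_nhds
    filter_upwards [nhdsWithin_le_nhds hsign, self_mem_nhdsWithin] with x hx (hxr : r < x)
    exact mul_neg_of_pos_of_neg (by linarith) (by nlinarith)
  · refine (Eventually.frequently ?_ : ∃ᶠ x in 𝓝[<] r, _).filter_mono nhdsWithin_le_nhds
    filter_upwards [nhdsWithin_le_nhds hsign, self_mem_nhdsWithin] with x hx (hxr : x < r)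
    exact mul_neg_of_neg_of_pos (by linarith) (by nlinarith)

theorem Polynomial.IsRoot.of_nonneg_iff {P Q : ℝ[X]} (hP : Squarefree P)
    (h : ∀ x, 0 ≤ P.eval x ↔ 0 ≤ Q.eval x) {r : ℝ} (hr : P.IsRoot r) : Q.IsRoot r := by
  by_contra hQr
  have hpos : 0 < Q.eval r := lt_of_le_of_ne ((h r).1 hr.symm.le) (Ne.symm hQr)
  have hPnn : ∀ᶠ x in 𝓝 r, 0 ≤ P.eval x :=
    (Q.continuous.continuousAt.eventually (lt_mem_nhds hpos)).mono fun x hx => (h x).2 hx.le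
  obtain ⟨x, hneg, hnn⟩ :=
    ((frequently_eval_neg_of_squarefree hP hr).and_eventually hPnn).exists
  exact hneg.not_ge hnn

theorem Polynomial.roots_eq_of_nonneg_iff {P Q : ℝ[X]} (hP : Squarefree P) (hQ : Squarefree Q)
    (h : ∀ x, 0 ≤ P.eval x ↔ 0 ≤ Q.eval x) : P.roots = Q.roots := by
  refine (Multiset.Nodup.ext (nodup_roots (PerfectField.separable_iff_squarefree.2 hP))
    (nodup_roots (PerfectField.separable_iff_squarefree.2 hQ))).2 fun r => ?_
  rw [mem_roots hP.ne_zero, mem_roots hQ.ne_zero]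
  exact ⟨IsRoot.of_nonneg_iff hP h, IsRoot.of_nonneg_iff hQ fun x => (h x).symm⟩

theorem Polynomial.Splits.eq_C_mul_of_roots_eq_s3 {K : Type*} [Field K] {P Q : K[X]}
    (hP : P.Splits) (hQ : Q.Splits) (hP0 : P ≠ 0) (h : P.roots = Q.roots) :
    Q = C (Q.leadingCoeff / P.leadingCoeff) * P :=
  calc Q = C Q.leadingCoeff * (Q.roots.map (X - C ·)).prod := hQ.eq_prod_roots
    _ = C (Q.leadingCoeff / P.leadingCoeff) *
          (C P.leadingCoeff * (P.roots.map (X - C ·)).prod) := by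
      rw [← h, ← mul_assoc, ← C_mul, div_mul_cancel₀ _ (leadingCoeff_ne_zero.2 hP0)]
    _ = C (Q.leadingCoeff / P.leadingCoeff) * P := by rw [← hP.eq_prod_roots]

theorem Polynomial.pos_of_nonneg_iff_nonneg_mul {P : ℝ[X]} (hP : P ≠ 0) {c : ℝ} (hc : c ≠ 0)
    (h : ∀ x, 0 ≤ P.eval x ↔ 0 ≤ c * P.eval x) : 0 < c := by
  refine hc.lt_or_gt.resolve_left fun hneg => hP (Polynomial.funext fun x => ?_)
  have := h x
  rw [eval_zero]
  rcases lt_trichotomy (P.eval x) 0 with hx | hx | hx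
  · exact absurd (this.2 (mul_nonneg_of_nonpos_of_nonpos hneg.le hx.le)) hx.not_ge
  · exact hx
  · exact absurd (this.1 hx.le) (mul_neg_of_neg_of_pos hneg hx).not_ge

theorem bijOn_scale_SQ_of_eval_eq {P Q : ℝ[X]} {μ : ℝ} (hμ : μ ≠ 0)
    (hQP : ∀ x, Q.eval x = μ ^ 2 * P.eval x) :
    Set.BijOn (fun v : ℝ × ℝ × ℝ => (v.1, μ * v.2.1, μ * v.2.2)) (SQ P) (SQ Q) ∧
      Set.InvOn (fun v : ℝ × ℝ × ℝ => (v.1, v.2.1 / μ, v.2.2 / μ))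
        (fun v : ℝ × ℝ × ℝ => (v.1, μ * v.2.1, μ * v.2.2)) (SQ P) (SQ Q) := by
  have hinv : Set.InvOn (fun v : ℝ × ℝ × ℝ => (v.1, v.2.1 / μ, v.2.2 / μ))
      (fun v : ℝ × ℝ × ℝ => (v.1, μ * v.2.1, μ * v.2.2)) (SQ P) (SQ Q) :=
    ⟨fun v _ => by simp [mul_div_cancel_left₀ _ hμ],
      fun v _ => by simp [mul_div_cancel₀ _ hμ]⟩
  refine ⟨hinv.bijOn (fun v (hv : _ = _) => ?_) (fun v (hv : _ = _) => ?_), hinv⟩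
  · change (μ * v.2.1) ^ 2 + (μ * v.2.2) ^ 2 = Q.eval v.1
    rw [hQP, ← hv]
    ring
  · change (v.2.1 / μ) ^ 2 + (v.2.2 / μ) ^ 2 = P.eval v.1
    rw [← mul_right_inj' (pow_ne_zero 2 hμ), ← hQP, ← hv]
    field_simp

/-- If two real-rooted squarefree real polynomials have the same nonnegativity set,
then for some `μ > 0` the scaling `(x,y,z) ↦ (x, μy, μz)` is a bijection from
`S_P` onto `S_Q`, with inverse `(x,y,z) ↦ (x, y/μ, z/μ)`. -/
theorem scaling_bijection_of_nonneg_set_eq (P Q : Polynomial ℝ)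
    (hP : RealRootedSquarefree P) (hQ : RealRootedSquarefree Q)
    (h : {x : ℝ | 0 ≤ P.eval x} = {x : ℝ | 0 ≤ Q.eval x}) :
    ∃ μ : ℝ, 0 < μ ∧
      Set.BijOn (fun v : ℝ × ℝ × ℝ => (v.1, μ * v.2.1, μ * v.2.2)) (SQ P) (SQ Q) ∧
      Set.InvOn (fun v : ℝ × ℝ × ℝ => (v.1, v.2.1 / μ, v.2.2 / μ))
        (fun v : ℝ × ℝ × ℝ => (v.1, μ * v.2.1, μ * v.2.2)) (SQ P) (SQ Q) := by
  obtain ⟨-, hPsf, hPreal⟩ := hP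
  obtain ⟨-, hQsf, hQreal⟩ := hQ
  have hnn : ∀ x, 0 ≤ P.eval x ↔ 0 ≤ Q.eval x := fun x => Set.ext_iff.1 h x
  obtain ⟨c, hQP⟩ : ∃ c, Q = C c * P :=
    ⟨_, (splits_of_forall_aeval_complex_eq_zero_im_eq_zero hPreal).eq_C_mul_of_roots_eq_s3
      (splits_of_forall_aeval_complex_eq_zero_im_eq_zero hQreal) hPsf.ne_zero
      (roots_eq_of_nonneg_iff hPsf hQsf hnn)⟩
  have hc0 : c ≠ 0 := fun hc => hQsf.ne_zero (by rw [hQP, hc, C_0, zero_mul])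
  have hc : 0 < c := pos_of_nonneg_iff_nonneg_mul hPsf.ne_zero hc0 fun x => by
    rw [hnn, hQP, eval_mul, eval_C]
  refine ⟨√c, Real.sqrt_pos.2 hc,
    bijOn_scale_SQ_of_eval_eq (Real.sqrt_pos.2 hc).ne' fun x => ?_⟩
  rw [hQP, eval_mul, eval_C, Real.sq_sqrt hc.le]
end

section
/- Let r ≥ 1 and let Q be a real-rooted and squarefree real polynomial of degree 2r with negative leading coefficient (so {x | Q(x) ≥ 0} is the union of exactly r pairwise disjoint bounded closed intervals). Then S_Q, with the topology induced from ℝ³, is homeomorphic to Fin r × S², the disjoint union of r copies of the unit 2-sphere S² ⊂ ℝ³ (Fin r carrying the discrete topology). In particular S_Q has exactly r connected components, each homeomorphic to a 2-sphere. -/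
/-!
Pairing the sorted roots of `Q` as `a k < b k` gives `Q t = c * ∏ k, (t - a k) * (t - b k)` with
`c < 0`, so `Q ≥ 0` exactly on the disjoint intervals `[a k, b k]`, and on each of them
`Q t = (t - a k) * (b k - t) * g k t` with `g k > 0`. Writing `x` for the affine image of
`u ∈ [-1, 1]` in `[a, b]`, one has `(x - a) * (b - x) = ((b - a) / 2) ^ 2 * (1 - u ^ 2)`, so
`(u, v, w) ↦ (x, ρ u * v, ρ u * w)` with `ρ u = (b - a) / 2 * √(g x)` maps the unit sphere
bijectively onto the part of the surface over `[a, b]`. A continuous bijection from the compact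
space `Fin r × S²` onto the Hausdorff space `S_Q` is a homeomorphism.
-/

open Polynomial Set Function

local notation "𝕊²" => Metric.sphere (0 : EuclideanSpace ℝ (Fin 3)) 1

theorem Polynomial.splits_of_aeval_complex_im_eq_zero {Q : ℝ[X]}
    (h : ∀ z : ℂ, aeval z Q = 0 → z.im = 0) : Q.Splits := by
  refine Splits.of_splits_map (algebraMap ℝ ℂ) (IsAlgClosed.splits _) fun z hz => ?_
  have hz0 : aeval z Q = 0 := by
    rw [aeval_def, ← eval_map]; exact (mem_roots'.mp hz).2
  exact ⟨z.re, Complex.ext (by simp) (by simp [h z hz0])⟩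

theorem Polynomial.Splits.exists_orderEmbedding_eval_eq_prod {Q : ℝ[X]} (hs : Q.Splits)
    (hsf : Squarefree Q) {n : ℕ} (hn : Q.natDegree = n) :
    ∃ x : Fin n ↪o ℝ, ∀ t, Q.eval t = Q.leadingCoeff * ∏ i, (t - x i) := by
  have hnodup : Q.roots.Nodup := nodup_roots (PerfectField.separable_iff_squarefree.mpr hsf)
  have hcard : Q.roots.toFinset.card = n := by
    rw [Multiset.toFinset_card_of_nodup hnodup, ← hn, ← splits_iff_card_roots.mp hs]
  refine ⟨Q.roots.toFinset.orderEmbOfFin hcard, fun t => ?_⟩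
  have hprod : (Q.roots.map (t - ·)).prod = ∏ x ∈ Q.roots.toFinset, (t - x) := by
    rw [Finset.prod_eq_multiset_prod, Multiset.toFinset_val, hnodup.dedup]
  rw [hs.eval_eq_prod_roots, hprod]
  conv_lhs => rw [← Finset.map_orderEmbOfFin_univ _ hcard, Finset.prod_map]
  rfl

theorem Polynomial.Splits.exists_intervals_eval_eq_prod {Q : ℝ[X]} (hs : Q.Splits)
    (hsf : Squarefree Q) {r : ℕ} (hdeg : Q.natDegree = r * 2) :
    ∃ a b : Fin r → ℝ, (∀ k, a k < b k) ∧ Pairwise (Disjoint on (fun k => Icc (a k) (b k))) ∧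
      ∀ t, Q.eval t = Q.leadingCoeff * ∏ k, (t - a k) * (t - b k) := by
  obtain ⟨x, hx⟩ := hs.exists_orderEmbedding_eval_eq_prod hsf hdeg
  -- `e (k, j) = 2 * k + j`, so the sorted roots are paired as `(x (2 * k), x (2 * k + 1))`
  let e : Fin r × Fin 2 ≃ Fin (r * 2) := finProdFinEquiv
  have hlt : ∀ k l j j', k < l → x (e (k, j)) < x (e (l, j')) := fun k l j j' hkl => by
    apply x.strictMono
    simp only [e, finProdFinEquiv, Equiv.coe_fn_mk, Fin.mk_lt_mk]
    have := Fin.lt_def.mp hkl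
    omega
  refine ⟨fun k => x (e (k, 0)), fun k => x (e (k, 1)), fun k => x.strictMono ?_, ?_, fun t => ?_⟩
  · simp [e, finProdFinEquiv, Fin.lt_def]
  · exact (pairwise_disjoint_on _).mpr fun k l h =>
      disjoint_left.mpr fun t hk hl => (hk.2.trans_lt (hlt k l 1 0 h)).not_ge hl.1
  · rw [hx, ← e.prod_comp, Fintype.prod_prod_type]
    simp [Fin.prod_univ_two]

theorem mul_sub_pos_of_notMem_Icc {a b t : ℝ} (hab : a ≤ b) (ht : t ∉ Icc a b) :
    0 < (t - a) * (t - b) := by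
  rw [mem_Icc, not_and_or, not_le, not_le] at ht
  rcases ht with h | h <;> nlinarith

section IntervalProduct

variable {r : ℕ} {a b : Fin r → ℝ} {t : ℝ}

theorem exists_mem_Icc_of_nonneg_mul_prod {c : ℝ} (hab : ∀ k, a k ≤ b k) (hc : c < 0)
    (h : 0 ≤ c * ∏ k, (t - a k) * (t - b k)) : ∃ k, t ∈ Icc (a k) (b k) := by
  by_contra! hout
  have := Finset.prod_pos fun k (_ : k ∈ Finset.univ) => mul_sub_pos_of_notMem_Icc (hab k) (hout k)
  nlinarith

theorem prod_erase_pos_of_mem_Icc (hab : ∀ k, a k ≤ b k)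
    (hdisj : Pairwise (Disjoint on (fun k => Icc (a k) (b k)))) {k : Fin r}
    (ht : t ∈ Icc (a k) (b k)) : 0 < ∏ l ∈ Finset.univ.erase k, (t - a l) * (t - b l) :=
  Finset.prod_pos fun l hl => mul_sub_pos_of_notMem_Icc (hab l)
    fun htl => (hdisj (Finset.ne_of_mem_erase hl)).notMem_of_mem_right ht htl

theorem mul_prod_eq_mul_prod_erase (c t : ℝ) (k : Fin r) :
    c * ∏ l, (t - a l) * (t - b l)
      = (t - a k) * (b k - t) * (-c * ∏ l ∈ Finset.univ.erase k, (t - a l) * (t - b l)) := by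
  rw [← Finset.mul_prod_erase _ _ (Finset.mem_univ k)]
  ring

end IntervalProduct

theorem EuclideanSpace.mem_sphere_zero_one_iff_fin_three {p : EuclideanSpace ℝ (Fin 3)} :
    p ∈ 𝕊² ↔ p 0 ^ 2 + p 1 ^ 2 + p 2 ^ 2 = 1 := by
  rw [EuclideanSpace.sphere_zero_eq 1 zero_le_one, mem_ofPred_eq, Fin.sum_univ_three, one_pow]

def revolutionSurface (f : ℝ → ℝ) : Set (ℝ × ℝ × ℝ) :=
  {v | v.2.1 ^ 2 + v.2.2 ^ 2 = f v.1}

section Spindle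

variable {a b : ℝ} {g f : ℝ → ℝ} {p : EuclideanSpace ℝ (Fin 3)}

noncomputable def intervalParam (a b u : ℝ) : ℝ := (a + b) / 2 + (b - a) / 2 * u

noncomputable def spindleRadius (a b : ℝ) (g : ℝ → ℝ) (u : ℝ) : ℝ :=
  (b - a) / 2 * √(g (intervalParam a b u))

noncomputable def spindle (a b : ℝ) (g : ℝ → ℝ) (p : EuclideanSpace ℝ (Fin 3)) : ℝ × ℝ × ℝ :=
  (intervalParam a b (p 0), spindleRadius a b g (p 0) * p 1, spindleRadius a b g (p 0) * p 2)

theorem intervalParam_mem_Icc (hab : a ≤ b) {u : ℝ} (hu : u ∈ Icc (-1) 1) :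
    intervalParam a b u ∈ Icc a b := by
  constructor <;> unfold intervalParam <;> nlinarith [hu.1, hu.2]

theorem intervalParam_sub_mul_sub (a b u : ℝ) :
    (intervalParam a b u - a) * (b - intervalParam a b u) = ((b - a) / 2) ^ 2 * (1 - u ^ 2) := by
  unfold intervalParam; ring

theorem coord_zero_mem_Icc_of_mem_sphere (hp : p ∈ 𝕊²) : p 0 ∈ Icc (-1) 1 := by
  rw [EuclideanSpace.mem_sphere_zero_one_iff_fin_three] at hp
  rw [mem_Icc, ← abs_le, ← sq_le_one_iff_abs_le_one]
  nlinarith [sq_nonneg (p 1), sq_nonneg (p 2)]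

theorem spindle_fst_mem_Icc (hab : a ≤ b) (hp : p ∈ 𝕊²) : (spindle a b g p).1 ∈ Icc a b :=
  intervalParam_mem_Icc hab (coord_zero_mem_Icc_of_mem_sphere hp)

theorem continuous_spindle (hg : Continuous g) : Continuous (spindle a b g) := by
  unfold spindle spindleRadius intervalParam
  fun_prop

theorem spindleRadius_sq (hab : a ≤ b) (hg : ∀ t ∈ Icc a b, 0 ≤ g t) {u : ℝ} (hu : u ∈ Icc (-1) 1) :
    spindleRadius a b g u ^ 2 = ((b - a) / 2) ^ 2 * g (intervalParam a b u) := by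
  rw [spindleRadius, mul_pow, Real.sq_sqrt (hg _ (intervalParam_mem_Icc hab hu))]

theorem spindle_mem_revolutionSurface (hab : a ≤ b) (hg : ∀ t ∈ Icc a b, 0 ≤ g t)
    (hf : ∀ t ∈ Icc a b, f t = (t - a) * (b - t) * g t)
    (hp : p ∈ 𝕊²) :
    spindle a b g p ∈ revolutionSurface f := by
  have hu := coord_zero_mem_Icc_of_mem_sphere hp
  rw [EuclideanSpace.mem_sphere_zero_one_iff_fin_three] at hp
  change (spindleRadius a b g (p 0) * p 1) ^ 2 + (spindleRadius a b g (p 0) * p 2) ^ 2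
    = f (intervalParam a b (p 0))
  rw [hf _ (intervalParam_mem_Icc hab hu), intervalParam_sub_mul_sub]
  linear_combination (p 1 ^ 2 + p 2 ^ 2) * spindleRadius_sq hab hg hu
    + ((b - a) / 2) ^ 2 * g (intervalParam a b (p 0)) * hp

theorem spindleRadius_pos (hab : a < b) (hg : ∀ t ∈ Icc a b, 0 < g t) {u : ℝ}
    (hu : u ∈ Icc (-1) 1) :
    0 < spindleRadius a b g u :=
  mul_pos (by linarith) (Real.sqrt_pos.mpr (hg _ (intervalParam_mem_Icc hab.le hu)))

theorem intervalParam_injective (hab : a ≠ b) : Injective (intervalParam a b) := fun u u' h => by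
  unfold intervalParam at h
  exact mul_left_cancel₀ (div_ne_zero (sub_ne_zero.mpr hab.symm) two_ne_zero) (add_left_cancel h)

theorem intervalParam_surjOn (hab : a < b) : SurjOn (intervalParam a b) (Icc (-1) 1) (Icc a b) := by
  intro t ht
  refine ⟨(2 * t - a - b) / (b - a), ?_, ?_⟩
  · rw [mem_Icc, le_div_iff₀ (by linarith), div_le_iff₀ (by linarith)]
    constructor <;> linarith [ht.1, ht.2]
  · have : b - a ≠ 0 := by linarith
    unfold intervalParam
    field_simp
    ring

theorem injOn_spindle (hab : a < b) (hg : ∀ t ∈ Icc a b, 0 < g t) :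
    InjOn (spindle a b g) (𝕊²) := by
  intro p hp q _ hpq
  simp only [spindle, Prod.mk.injEq] at hpq
  obtain ⟨h0, h1, h2⟩ := hpq
  have h0 : p 0 = q 0 := intervalParam_injective hab.ne h0
  have hρ := (spindleRadius_pos hab hg (coord_zero_mem_Icc_of_mem_sphere hp)).ne'
  rw [h0] at h1 h2 hρ
  ext i
  fin_cases i
  exacts [h0, mul_left_cancel₀ hρ h1, mul_left_cancel₀ hρ h2]

theorem exists_spindle_eq (hab : a < b) (hg : ∀ t ∈ Icc a b, 0 < g t)
    (hf : ∀ t ∈ Icc a b, f t = (t - a) * (b - t) * g t) {v : ℝ × ℝ × ℝ}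
    (hv : v ∈ revolutionSurface f) (hv₁ : v.1 ∈ Icc a b) :
    ∃ p ∈ 𝕊², spindle a b g p = v := by
  obtain ⟨x, y, z⟩ := v
  obtain ⟨u, hu, rfl⟩ := intervalParam_surjOn hab hv₁
  let ρ := spindleRadius a b g u
  have hρ : 0 < ρ := spindleRadius_pos hab hg hu
  have hyz : y ^ 2 + z ^ 2 = ρ ^ 2 * (1 - u ^ 2) := by
    change y ^ 2 + z ^ 2 = f (intervalParam a b u) at hv
    rw [hv, hf _ hv₁, intervalParam_sub_mul_sub,
      spindleRadius_sq hab.le (fun t ht => (hg t ht).le) hu]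
    ring
  refine ⟨!₂[u, y / ρ, z / ρ], ?_, ?_⟩
  · rw [EuclideanSpace.mem_sphere_zero_one_iff_fin_three]
    simp only [Fin.isValue, Matrix.cons_val_zero, Matrix.cons_val_one, Matrix.cons_val]
    field_simp
    linear_combination hyz
  · change (intervalParam a b u, ρ * (y / ρ), ρ * (z / ρ)) = _
    rw [mul_div_cancel₀ _ hρ.ne', mul_div_cancel₀ _ hρ.ne']

end Spindle

theorem nonempty_homeomorph_revolutionSurface {f : ℝ → ℝ} {r : ℕ} {a b : Fin r → ℝ}
    {g : Fin r → ℝ → ℝ} (hab : ∀ k, a k < b k)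
    (hdisj : Pairwise (Disjoint on (fun k => Icc (a k) (b k))))
    (hg : ∀ k, Continuous (g k)) (hgpos : ∀ k, ∀ t ∈ Icc (a k) (b k), 0 < g k t)
    (hf : ∀ k, ∀ t ∈ Icc (a k) (b k), f t = (t - a k) * (b k - t) * g k t)
    (hcover : ∀ t, 0 ≤ f t → ∃ k, t ∈ Icc (a k) (b k)) :
    Nonempty (revolutionSurface f ≃ₜ Fin r × 𝕊²) := by
  let F : Fin r × 𝕊² → revolutionSurface f :=
    fun q => ⟨spindle (a q.1) (b q.1) (g q.1) q.2, spindle_mem_revolutionSurface (hab q.1).le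
      (fun t ht => (hgpos q.1 t ht).le) (hf q.1) q.2.2⟩
  have hF : Continuous F := continuous_prod_of_discrete_left.mpr fun k =>
    ((continuous_spindle (a := a k) (b := b k) (hg k)).comp continuous_subtype_val).subtype_mk _
  have hinj : Injective F := by
    rintro ⟨k, p⟩ ⟨l, q⟩ hpq
    have hpq : spindle (a k) (b k) (g k) p = spindle (a l) (b l) (g l) q := congrArg Subtype.val hpq
    obtain rfl : k = l := by
      by_contra hkl
      refine (hdisj hkl).notMem_of_mem_left (spindle_fst_mem_Icc (g := g k) (hab k).le p.2) ?_
      rw [hpq]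
      exact spindle_fst_mem_Icc (hab l).le q.2
    rw [Subtype.ext (injOn_spindle (hab k) (hgpos k) p.2 q.2 hpq)]
  have hsurj : Surjective F := by
    rintro ⟨v, hv⟩
    obtain ⟨k, hk⟩ := hcover v.1 (hv ▸ by positivity)
    obtain ⟨p, hp, hpv⟩ := exists_spindle_eq (hab k) (hgpos k) (hf k) hv hk
    exact ⟨(k, ⟨p, hp⟩), Subtype.ext hpv⟩
  exact ⟨(hF.homeoOfEquivCompactToT2 (f := Equiv.ofBijective F ⟨hinj, hsurj⟩)).symm⟩

theorem SQ_homeomorph_spheres_general (r : ℕ) (Q : Polynomial ℝ)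
    (hQ : RealRootedSquarefree Q) (hdeg : Q.natDegree = 2 * r)
    (hlead : Q.leadingCoeff < 0) :
    Nonempty ((SQ Q) ≃ₜ (Fin r × (Metric.sphere (0 : EuclideanSpace ℝ (Fin 3)) 1))) := by
  obtain ⟨-, hsf, hreal⟩ := hQ
  obtain ⟨a, b, hab, hdisj, hQab⟩ :=
    (splits_of_aeval_complex_im_eq_zero hreal).exists_intervals_eval_eq_prod hsf
      (hdeg.trans (mul_comm 2 r))
  -- `SQ Q` is `revolutionSurface (Q.eval ·)` by definition
  refine nonempty_homeomorph_revolutionSurface (f := fun t => Q.eval t)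
    (g := fun k t => -Q.leadingCoeff * ∏ l ∈ Finset.univ.erase k, (t - a l) * (t - b l))
    hab hdisj (fun k => by fun_prop) (fun k t ht => ?_) (fun k t _ => ?_) (fun t ht => ?_)
  · exact mul_pos (neg_pos.mpr hlead) (prod_erase_pos_of_mem_Icc (fun l => (hab l).le) hdisj ht)
  · rw [hQab, mul_prod_eq_mul_prod_erase]
  · exact exists_mem_Icc_of_nonneg_mul_prod (fun l => (hab l).le) hlead (hQab t ▸ ht)

/-- If `Q` is real-rooted squarefree of degree `2r` (`r ≥ 1`) with negative leading
coefficient, then `S_Q` (with its topology as a subset of `ℝ³`) is homeomorphic to the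
disjoint union of `r` copies of the unit `2`-sphere. -/
theorem SQ_homeomorph_spheres (r : ℕ) (hr : 1 ≤ r) (Q : Polynomial ℝ)
    (hQ : RealRootedSquarefree Q) (hdeg : Q.natDegree = 2 * r)
    (hlead : Q.leadingCoeff < 0) :
    Nonempty ((SQ Q) ≃ₜ (Fin r × (Metric.sphere (0 : EuclideanSpace ℝ (Fin 3)) 1))) :=
  SQ_homeomorph_spheres_general r Q hQ hdeg hlead
end

section
/- For every integer r ≥ 3 there exist 2r pairwise distinct real numbers a₁, …, a_{2r} with the following property: for all real numbers α, β, γ, δ with αδ − βγ ≠ 0, if for every i one has γ·aᵢ + δ ≠ 0 and (α·aᵢ + β)/(γ·aᵢ + δ) ∈ {a₁, …, a_{2r}}, then (α·aᵢ + β)/(γ·aᵢ + δ) = aᵢ for every i. In other words, there exists a set of 2r distinct points of the real line whose only Möbius symmetry is the identity. -/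
/-!
Build the points one at a time so that cross ratios separate 4-element subsets: two injective
quadruples with equal cross ratio have the same underlying set. A new point `t` only has to avoid
finitely many values, because `t ↦ crossRatio t x y z` is an injective Möbius function and two
such functions with different parameters agree in at most two points.

A Möbius map permuting such a set preserves cross ratios, hence maps every 4-subset onto itself.
If it moved a point `x`, a 4-subset containing `x` but not its image (available once there are at
least five points) would be a contradiction.
-/

open Function Set

-- Division by zero gives the junk value `0` when `w = z` or `x = y`.
noncomputable def crossRatio (w x y z : ℝ) : ℝ := (w - y) * (x - z) / ((w - z) * (x - y))

noncomputable def mobius (α β γ δ x : ℝ) : ℝ := (α * x + β) / (γ * x + δ)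

theorem mobius_sub_mobius {α β γ δ x y : ℝ} (hx : γ * x + δ ≠ 0) (hy : γ * y + δ ≠ 0) :
    mobius α β γ δ x - mobius α β γ δ y =
      (α * δ - β * γ) * (x - y) / ((γ * x + δ) * (γ * y + δ)) := by
  rw [mobius, mobius, div_sub_div _ _ hx hy]
  ring

theorem mobius_injOn {α β γ δ : ℝ} (hdet : α * δ - β * γ ≠ 0) :
    InjOn (mobius α β γ δ) {x | γ * x + δ ≠ 0} := by
  intro x (hx : γ * x + δ ≠ 0) y (hy : γ * y + δ ≠ 0) hxy
  have h := mobius_sub_mobius (α := α) (β := β) hx hy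
  rw [hxy, sub_self, eq_comm, div_eq_zero_iff] at h
  simpa [hdet, hx, hy, sub_eq_zero] using h

theorem crossRatio_mobius {α β γ δ w x y z : ℝ} (hdet : α * δ - β * γ ≠ 0)
    (hw : γ * w + δ ≠ 0) (hx : γ * x + δ ≠ 0) (hy : γ * y + δ ≠ 0) (hz : γ * z + δ ≠ 0)
    (hwz : w ≠ z) (hxy : x ≠ y) :
    crossRatio (mobius α β γ δ w) (mobius α β γ δ x) (mobius α β γ δ y) (mobius α β γ δ z) =
      crossRatio w x y z := by
  have hwz' := sub_ne_zero.2 hwz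
  have hxy' := sub_ne_zero.2 hxy
  rw [crossRatio, crossRatio, mobius_sub_mobius hw hy, mobius_sub_mobius hx hz,
    mobius_sub_mobius hw hz, mobius_sub_mobius hx hy]
  field_simp

theorem crossRatio_eq_mobius (t x y z : ℝ) :
    crossRatio t x y z = mobius (x - z) (-(y * (x - z))) (x - y) (-(z * (x - y))) t := by
  rw [crossRatio, mobius]
  congr 1 <;> ring

theorem crossRatio_left_injOn {x y z : ℝ} (hxy : x ≠ y) (hxz : x ≠ z) (hyz : y ≠ z) :
    InjOn (crossRatio · x y z) {z}ᶜ := by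
  have hdet : (x - z) * -(z * (x - y)) - -(y * (x - z)) * (x - y) ≠ 0 := by
    rw [show (x - z) * -(z * (x - y)) - -(y * (x - z)) * (x - y) = (x - z) * (x - y) * (y - z) by
      ring]
    exact mul_ne_zero (mul_ne_zero (sub_ne_zero.2 hxz) (sub_ne_zero.2 hxy)) (sub_ne_zero.2 hyz)
  have hdom : ∀ t ∈ ({z}ᶜ : Set ℝ), (x - y) * t + -(z * (x - y)) ≠ 0 := fun t ht => by
    rw [show (x - y) * t + -(z * (x - y)) = (x - y) * (t - z) by ring]
    exact mul_ne_zero (sub_ne_zero.2 hxy) (sub_ne_zero.2 ht)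
  intro s hs t ht hst
  exact mobius_injOn hdet (hdom s hs) (hdom t ht) (by simpa only [crossRatio_eq_mobius] using hst)

theorem finite_setOf_crossRatio_eq {u : Fin 3 → ℝ} (hu : Injective u) (c : ℝ) :
    {t | crossRatio t (u 0) (u 1) (u 2) = c}.Finite := by
  refine Finite.of_sdiff (t := {u 2}) (Subsingleton.finite ?_) (finite_singleton _)
  rintro s ⟨hs, hs2⟩ t ⟨ht, ht2⟩
  exact crossRatio_left_injOn (hu.ne (by decide)) (hu.ne (by decide)) (hu.ne (by decide))
    hs2 ht2 (hs.trans ht.symm)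

theorem eq_of_infinite_setOf_crossRatio_eq {x y z x' y' z' : ℝ} (hxy : x ≠ y) (hxz : x ≠ z)
    (hyz : y ≠ z) (hxy' : x' ≠ y') (hxz' : x' ≠ z') (hyz' : y' ≠ z')
    (hinf : {t | crossRatio t x y z = crossRatio t x' y' z'}.Infinite) :
    x = x' ∧ y = y' ∧ z = z' := by
  -- Off `{z, z'}` the equation is a quadratic polynomial identity in `t`, hence holds for all `t`;
  -- evaluating it at `y`, `z'` and `x` recovers the parameters.
  open Polynomial in
  have key : ∀ t, (t - y) * (x - z) * ((t - z') * (x' - y')) =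
      (t - y') * (x' - z') * ((t - z) * (x - y)) := by
    set P : ℝ[X] := (X - C y) * C (x - z) * ((X - C z') * C (x' - y'))
    set Q : ℝ[X] := (X - C y') * C (x' - z') * ((X - C z) * C (x - y))
    have hPQ : P = Q := by
      refine eq_of_infinite_eval_eq P Q ((hinf.sdiff (toFinite {z, z'})).mono ?_)
      rintro t ⟨ht, htzz⟩
      simp only [mem_insert_iff, mem_singleton_iff, not_or] at htzz
      simp only [mem_ofPred_eq, crossRatio] at ht
      rw [div_eq_div_iff (mul_ne_zero (sub_ne_zero.2 htzz.1) (sub_ne_zero.2 hxy))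
        (mul_ne_zero (sub_ne_zero.2 htzz.2) (sub_ne_zero.2 hxy'))] at ht
      simp only [mem_ofPred_eq, P, Q, eval_mul, eval_sub, eval_X, eval_C]
      linear_combination ht
    intro t
    simpa [P, Q] using congrArg (Polynomial.eval t) hPQ
  have hy : y = y' := by simpa [sub_eq_zero, hxz', hyz, hxy] using key y
  have hz : z = z' := by simpa [sub_eq_zero, hxz', hyz', hxy, eq_comm] using key z'
  subst hy hz
  have hx : (x - y) * (x - z) * (y - z) * (x - x') = 0 := by linear_combination -key x
  simpa [sub_eq_zero, hxy, hxz, hyz] using hx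

theorem finite_setOf_crossRatio_eq_crossRatio {u v : Fin 3 → ℝ} (hu : Injective u)
    (hv : Injective v) (huv : u ≠ v) :
    {t | crossRatio t (u 0) (u 1) (u 2) = crossRatio t (v 0) (v 1) (v 2)}.Finite := by
  by_contra hinf
  obtain ⟨h0, h1, h2⟩ := eq_of_infinite_setOf_crossRatio_eq (hu.ne (by decide)) (hu.ne (by decide))
    (hu.ne (by decide)) (hv.ne (by decide)) (hv.ne (by decide)) (hv.ne (by decide)) hinf
  exact huv (funext fun i => by fin_cases i <;> assumption)

def CrossRatioGeneric (S : Set ℝ) : Prop :=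
  ∀ ⦃p q : Fin 4 → ℝ⦄, Injective p → Injective q → range p ⊆ S → range q ⊆ S →
    crossRatio (p 0) (p 1) (p 2) (p 3) = crossRatio (q 0) (q 1) (q 2) (q 3) → range p = range q

-- The Klein four-group preserves the cross ratio and acts transitively on the positions.
theorem exists_perm_crossRatio_comp_eq (k : Fin 4) :
    ∃ σ : Equiv.Perm (Fin 4), σ 0 = k ∧ ∀ p : Fin 4 → ℝ,
      crossRatio (p (σ 0)) (p (σ 1)) (p (σ 2)) (p (σ 3)) = crossRatio (p 0) (p 1) (p 2) (p 3) := by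
  fin_cases k
  · exact ⟨1, rfl, fun p => rfl⟩
  · refine ⟨Equiv.swap 0 1 * Equiv.swap 2 3, rfl, fun p => ?_⟩
    change crossRatio (p 1) (p 0) (p 3) (p 2) = _
    unfold crossRatio; congr 1 <;> ring
  · refine ⟨Equiv.swap 0 2 * Equiv.swap 1 3, rfl, fun p => ?_⟩
    change crossRatio (p 2) (p 3) (p 0) (p 1) = _
    unfold crossRatio; congr 1 <;> ring
  · refine ⟨Equiv.swap 0 3 * Equiv.swap 1 2, rfl, fun p => ?_⟩
    change crossRatio (p 3) (p 2) (p 1) (p 0) = _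
    unfold crossRatio; congr 1 <;> ring

theorem exists_tail_of_mem_range {p : Fin 4 → ℝ} (hp : Injective p) {t : ℝ} (ht : t ∈ range p) :
    ∃ u : Fin 3 → ℝ, Injective u ∧ t ∉ range u ∧ range p = insert t (range u) ∧
      crossRatio (p 0) (p 1) (p 2) (p 3) = crossRatio t (u 0) (u 1) (u 2) := by
  obtain ⟨k, rfl⟩ := ht
  obtain ⟨σ, hσ0, hσ⟩ := exists_perm_crossRatio_comp_eq k
  have hpσ : Injective (p ∘ σ) := hp.comp σ.injective
  refine ⟨Fin.tail (p ∘ σ), hpσ.comp (Fin.succ_injective 3), ?_, ?_, ?_⟩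
  · rintro ⟨i, hi⟩
    rw [← hσ0] at hi
    exact Fin.succ_ne_zero i (hpσ hi)
  · rw [← EquivLike.range_comp p σ, ← Fin.cons_self_tail (p ∘ σ), Fin.range_cons]
    simp [hσ0]
  · rw [← hσ p, hσ0]
    rfl

namespace CrossRatioGeneric

theorem insert_of_crossRatio_ne {S : Set ℝ} (hS : CrossRatioGeneric S) {t : ℝ}
    (hsingle : ∀ ⦃u : Fin 3 → ℝ⦄ ⦃q : Fin 4 → ℝ⦄, Injective u → range u ⊆ S → range q ⊆ S →
      crossRatio t (u 0) (u 1) (u 2) ≠ crossRatio (q 0) (q 1) (q 2) (q 3))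
    (hpair : ∀ ⦃u v : Fin 3 → ℝ⦄, Injective u → Injective v → range u ⊆ S → range v ⊆ S →
      u ≠ v → crossRatio t (u 0) (u 1) (u 2) ≠ crossRatio t (v 0) (v 1) (v 2)) :
    CrossRatioGeneric (insert t S) := by
  intro p q hp hq hpS hqS hcr
  by_contra hne
  wlog htp : t ∈ range p generalizing p q
  · by_cases htq : t ∈ range q
    · exact this hq hp hqS hpS hcr.symm (Ne.symm hne) htq
    · exact hne (hS hp hq ((subset_insert_iff_of_notMem htp).1 hpS)
        ((subset_insert_iff_of_notMem htq).1 hqS) hcr)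
  obtain ⟨u, hu, htu, hpu, hcru⟩ := exists_tail_of_mem_range hp htp
  have huS : range u ⊆ S := by
    rw [hpu, insert_subset_insert_iff htu] at hpS
    exact hpS
  by_cases htq : t ∈ range q
  · obtain ⟨v, hv, htv, hqv, hcrv⟩ := exists_tail_of_mem_range hq htq
    have hvS : range v ⊆ S := by
      rw [hqv, insert_subset_insert_iff htv] at hqS
      exact hqS
    exact hpair hu hv huS hvS (fun huv => hne (by rw [hpu, hqv, huv]))
      (hcru.symm.trans (hcr.trans hcrv))
  · exact hsingle hu huS ((subset_insert_iff_of_notMem htq).1 hqS) (hcru.symm.trans hcr)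

theorem exists_insert {S : Set ℝ} (hS : CrossRatioGeneric S) (hfin : S.Finite) :
    ∃ t ∉ S, CrossRatioGeneric (insert t S) := by
  set T := {u : Fin 3 → ℝ | Injective u ∧ range u ⊆ S}
  set Q := {q : Fin 4 → ℝ | range q ⊆ S}
  have hT : T.Finite := (Finite.pi fun _ => hfin).subset fun u hu => by
    simpa [range_subset_iff] using hu.2
  have hQ : Q.Finite := (Finite.pi fun _ => hfin).subset fun q hq => by
    simpa [Q, range_subset_iff] using hq
  set B₁ := ⋃ u ∈ T, ⋃ q ∈ Q,
    {t | crossRatio t (u 0) (u 1) (u 2) = crossRatio (q 0) (q 1) (q 2) (q 3)}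
  set B₂ := ⋃ u ∈ T, ⋃ v ∈ T \ {u},
    {t | crossRatio t (u 0) (u 1) (u 2) = crossRatio t (v 0) (v 1) (v 2)}
  have hB₁ : B₁.Finite := hT.biUnion fun u hu => hQ.biUnion fun q _ =>
    finite_setOf_crossRatio_eq hu.1 _
  have hB₂ : B₂.Finite := hT.biUnion fun u hu => hT.sdiff.biUnion fun v hv =>
    finite_setOf_crossRatio_eq_crossRatio hu.1 hv.1.1 (Ne.symm hv.2)
  obtain ⟨t, ht⟩ := ((hfin.union hB₁).union hB₂).exists_notMem
  simp only [mem_union, not_or] at ht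
  obtain ⟨⟨htS, htB₁⟩, htB₂⟩ := ht
  refine ⟨t, htS, hS.insert_of_crossRatio_ne (fun u q hu huS hqS hcr => htB₁ ?_)
    (fun u v hu hv huS hvS huv hcr => htB₂ ?_)⟩
  · exact mem_biUnion ⟨hu, huS⟩ (mem_biUnion hqS hcr)
  · exact mem_biUnion ⟨hu, huS⟩ (mem_biUnion ⟨⟨hv, hvS⟩, Ne.symm huv⟩ hcr)

theorem exists_finset_card_eq (n : ℕ) :
    ∃ S : Finset ℝ, S.card = n ∧ CrossRatioGeneric (S : Set ℝ) := by
  induction n with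
  | zero => exact ⟨∅, rfl, fun p _ _ _ hp => absurd (hp ⟨0, rfl⟩) (Finset.notMem_empty _)⟩
  | succ n ih =>
    obtain ⟨S, hcard, hS⟩ := ih
    obtain ⟨t, htS, ht⟩ := hS.exists_insert S.finite_toSet
    classical
    exact ⟨insert t S, by rw [Finset.card_insert_of_notMem htS, hcard],
      by rwa [Finset.coe_insert]⟩

theorem eqOn_id_of_crossRatio_eq {S : Set ℝ} (hS : CrossRatioGeneric S) (hcard : 5 ≤ S.ncard)
    {f : ℝ → ℝ} (hmaps : MapsTo f S S) (hinj : InjOn f S)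
    (hcr : ∀ ⦃p : Fin 4 → ℝ⦄, Injective p → range p ⊆ S →
      crossRatio (f (p 0)) (f (p 1)) (f (p 2)) (f (p 3)) = crossRatio (p 0) (p 1) (p 2) (p 3)) :
    EqOn f id S := by
  intro x hx
  by_contra hfx
  have hfin : S.Finite := finite_of_ncard_pos (by omega)
  have h3 : 2 < (S \ {x, f x}).ncard := by
    have hpair : ({x, f x} : Set ℝ).ncard ≤ 2 := (ncard_insert_le _ _).trans (by simp)
    have := le_ncard_sdiff {x, f x} S
    omega
  obtain ⟨a, b, c, ha, hb, hc, hab, hac, hbc⟩ := (two_lt_ncard_iff hfin.sdiff).1 h3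
  simp only [mem_sdiff, mem_insert_iff, mem_singleton_iff, not_or] at ha hb hc
  set p : Fin 4 → ℝ := ![x, a, b, c]
  have hp : Injective p := by
    rw [← List.nodup_ofFn]
    simp [p, *, Ne.symm ha.2.1, Ne.symm hb.2.1, Ne.symm hc.2.1]
  have hpS : range p ⊆ S := by simp [p, insert_subset_iff, *]
  have hfp : Injective (f ∘ p) := fun i j hij => hp (hinj (hpS ⟨i, rfl⟩) (hpS ⟨j, rfl⟩) hij)
  have hrange := hS hfp hp (range_comp f p ▸ hmaps.image_subset.trans' (image_mono hpS))
    hpS (hcr hp hpS)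
  obtain ⟨i, hi⟩ : f x ∈ range p := hrange ▸ ⟨0, rfl⟩
  fin_cases i
  exacts [hfx hi.symm, ha.2.2 hi, hb.2.2 hi, hc.2.2 hi]

theorem mobius_eqOn_id {S : Set ℝ} (hS : CrossRatioGeneric S) (hcard : 5 ≤ S.ncard)
    {α β γ δ : ℝ} (hdet : α * δ - β * γ ≠ 0) (hdom : S ⊆ {x | γ * x + δ ≠ 0})
    (hmaps : MapsTo (mobius α β γ δ) S S) : EqOn (mobius α β γ δ) id S :=
  hS.eqOn_id_of_crossRatio_eq hcard hmaps ((mobius_injOn hdet).mono hdom) fun p hp hpS =>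
    crossRatio_mobius hdet (hdom (hpS ⟨0, rfl⟩)) (hdom (hpS ⟨1, rfl⟩)) (hdom (hpS ⟨2, rfl⟩))
      (hdom (hpS ⟨3, rfl⟩)) (hp.ne (by decide)) (hp.ne (by decide))

end CrossRatioGeneric

/-- For every `r ≥ 3` there exist `2r` pairwise distinct real numbers whose only
Möbius symmetry is the identity: any real Möbius transformation defined at all of
them and mapping each of them into the set must fix each of them. -/
theorem exists_mobius_rigid_tuple (r : ℕ) (hr : 3 ≤ r) :
    ∃ a : Fin (2 * r) → ℝ, Function.Injective a ∧
      ∀ α β γ δ : ℝ, α * δ - β * γ ≠ 0 →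
        (∀ i, γ * a i + δ ≠ 0 ∧ (α * a i + β) / (γ * a i + δ) ∈ Set.range a) →
        ∀ i, (α * a i + β) / (γ * a i + δ) = a i := by
  obtain ⟨S, hcard, hS⟩ := CrossRatioGeneric.exists_finset_card_eq (2 * r)
  have hrange : range (S.orderEmbOfFin hcard) = S := S.range_orderEmbOfFin hcard
  refine ⟨S.orderEmbOfFin hcard, (S.orderEmbOfFin hcard).injective, fun α β γ δ hdet h => ?_⟩
  have hdom : (S : Set ℝ) ⊆ {x | γ * x + δ ≠ 0} := by
    rw [← hrange]
    rintro _ ⟨i, rfl⟩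
    exact (h i).1
  have hmaps : MapsTo (mobius α β γ δ) S S := by
    rw [← hrange]
    rintro _ ⟨i, rfl⟩
    exact (h i).2
  have hfix := hS.mobius_eqOn_id (by rw [ncard_coe_finset]; omega) hdet hdom hmaps
  exact fun i => hfix (hrange ▸ mem_range_self i)
end

section
/- Let r ≥ 3 and consider ℝ^{2r} with the product topology. The set W of tuples (a₁, …, a_{2r}) ∈ ℝ^{2r} with pairwise distinct entries for which there exist real numbers α, β, γ, δ with αδ − βγ ≠ 0 such that (i) for every i, γ·aᵢ + δ ≠ 0 and (α·aᵢ + β)/(γ·aᵢ + δ) ∈ {a₁, …, a_{2r}}, and (ii) for some j, (α·a_j + β)/(γ·a_j + δ) ≠ a_j, has empty interior in ℝ^{2r}. In other words, a general set of 2r distinct points of the real line admits no nontrivial Möbius symmetry. -/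
/-!
Perturb one point `a p` of a tuple with a nontrivial Möbius symmetry. Only finitely many index
permutations can occur, and a Möbius map is determined by three values, so for a fixed
permutation `σ` all the symmetries agree with one map `m` as soon as three indices other than `p`
are mapped away from `p` (this needs `2r ≥ 5`). Then `m` sends every admissible value `t` of the
moving point to the value of the tuple at `σ p`: if `σ p = p`, the map `m` fixes three points and
is the identity, so `σ = 1`; otherwise `m` is not injective. Hence only finitely many `t` are
admissible, whereas an open set of tuples would allow a whole interval of them.
-/

open Function Equiv Finset

theorem eq_zero_of_three_roots {R : Type*} [CommRing R] [NoZeroDivisors R]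
    {A B C x₁ x₂ x₃ : R}
    (h12 : x₁ ≠ x₂) (h13 : x₁ ≠ x₃) (h23 : x₂ ≠ x₃)
    (h1 : A * x₁ ^ 2 + B * x₁ + C = 0) (h2 : A * x₂ ^ 2 + B * x₂ + C = 0)
    (h3 : A * x₃ ^ 2 + B * x₃ + C = 0) :
    A = 0 ∧ B = 0 ∧ C = 0 := by
  have f12 : A * (x₁ + x₂) + B = 0 := by
    refine (mul_eq_zero.1 ?_).resolve_left (sub_ne_zero.2 h12)
    linear_combination h1 - h2
  have f13 : A * (x₁ + x₃) + B = 0 := by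
    refine (mul_eq_zero.1 ?_).resolve_left (sub_ne_zero.2 h13)
    linear_combination h1 - h3
  have hA : A = 0 := by
    refine (mul_eq_zero.1 ?_).resolve_right (sub_ne_zero.2 h23)
    linear_combination f12 - f13
  have hB : B = 0 := by linear_combination f12 - (x₁ + x₂) * hA
  exact ⟨hA, hB, by linear_combination h1 - x₁ ^ 2 * hA - x₁ * hB⟩

/-- The coefficients of the Möbius map `x ↦ (α x + β) / (γ x + δ)`. -/
structure Mobius (K : Type*) where
  α : K
  β : K
  γ : K
  δ : K

namespace Mobius

variable {K : Type*} [Field K] (m m' : Mobius K)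

def det : K := m.α * m.δ - m.β * m.γ

protected def id : Mobius K := ⟨1, 0, 0, 1⟩

def Sends (x y : K) : Prop :=
  m.γ * x + m.δ ≠ 0 ∧ m.α * x + m.β = y * (m.γ * x + m.δ)

/-- The two maps agree at `x` as points of the projective line. -/
def AgreeAt (x : K) : Prop :=
  (m.α * x + m.β) * (m'.γ * x + m'.δ) = (m'.α * x + m'.β) * (m.γ * x + m.δ)

variable {m m'} {x x' y y' : K}

theorem sends_iff_div :
    m.Sends x y ↔ m.γ * x + m.δ ≠ 0 ∧ (m.α * x + m.β) / (m.γ * x + m.δ) = y := by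
  refine and_congr_right fun hx => ?_
  rw [div_eq_iff hx, eq_comm]

theorem sends_id (x : K) : Mobius.id.Sends x x := by
  simp [Mobius.id, Sends]

theorem eq_of_sends_of_sends (hdet : m.det ≠ 0) (hx : m.Sends x y) (hx' : m.Sends x' y) :
    x = x' := by
  have h : m.det * (x - x') = 0 := by
    unfold det
    linear_combination (m.γ * x' + m.δ) * hx.2 - (m.γ * x + m.δ) * hx'.2
  exact sub_eq_zero.1 ((mul_eq_zero.1 h).resolve_left hdet)

theorem agreeAt_of_sends (h : m.Sends x y) (h' : m'.Sends x y) : m.AgreeAt m' x := by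
  unfold AgreeAt
  linear_combination (m'.γ * x + m'.δ) * h.2 - (m.γ * x + m.δ) * h'.2

theorem eq_of_agreeAt (h : m.AgreeAt m' x) (hy : m.Sends x y) (hy' : m'.Sends x y') : y = y' := by
  have e : (y - y') * ((m.γ * x + m.δ) * (m'.γ * x + m'.δ)) = 0 := by
    unfold AgreeAt at h
    linear_combination (m.γ * x + m.δ) * hy'.2 - (m'.γ * x + m'.δ) * hy.2 + h
  exact sub_eq_zero.1 ((mul_eq_zero.1 e).resolve_right (mul_ne_zero hy.1 hy'.1))

/-- A nonzero determinant keeps numerator and denominator from vanishing together. -/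
theorem sends_of_agreeAt (hdet : m.det ≠ 0) (h : m.AgreeAt m' x) (h' : m'.Sends x y) :
    m.Sends x y := by
  have hnum : m.α * x + m.β = y * (m.γ * x + m.δ) := by
    have e : (m.α * x + m.β - y * (m.γ * x + m.δ)) * (m'.γ * x + m'.δ) = 0 := by
      unfold AgreeAt at h
      linear_combination h + (m.γ * x + m.δ) * h'.2
    exact sub_eq_zero.1 ((mul_eq_zero.1 e).resolve_right h'.1)
  refine ⟨fun hden => hdet ?_, hnum⟩
  rw [hden, mul_zero] at hnum
  unfold det
  linear_combination m.α * hden - m.γ * hnum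

theorem agreeAt_of_three {x₁ x₂ x₃ : K}
    (h12 : x₁ ≠ x₂) (h13 : x₁ ≠ x₃) (h23 : x₂ ≠ x₃)
    (h1 : m.AgreeAt m' x₁) (h2 : m.AgreeAt m' x₂) (h3 : m.AgreeAt m' x₃) (x : K) :
    m.AgreeAt m' x := by
  unfold AgreeAt at *
  obtain ⟨hA, hB, hC⟩ := eq_zero_of_three_roots (A := m.α * m'.γ - m'.α * m.γ)
    (B := m.α * m'.δ + m.β * m'.γ - m'.α * m.δ - m'.β * m.γ)
    (C := m.β * m'.δ - m'.β * m.δ)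
    h12 h13 h23 (by linear_combination h1) (by linear_combination h2)
    (by linear_combination h3)
  linear_combination x ^ 2 * hA + x * hB + hC

end Mobius

section Rigidity

variable {K ι : Type*} [Field K]

def IsMobiusPerm (b : ι → K) (σ : Perm ι) : Prop :=
  ∃ m : Mobius K, m.det ≠ 0 ∧ ∀ i, m.Sends (b i) (b (σ i))

theorem exists_isMobiusPerm_ne_one [Finite ι] {b : ι → K} (hb : Injective b) {α β γ δ : K}
    (hdet : α * δ - β * γ ≠ 0)
    (hmaps : ∀ i, γ * b i + δ ≠ 0 ∧ (α * b i + β) / (γ * b i + δ) ∈ Set.range b)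
    (hmoves : ∃ j, (α * b j + β) / (γ * b j + δ) ≠ b j) :
    ∃ σ : Perm ι, σ ≠ 1 ∧ IsMobiusPerm b σ := by
  let m : Mobius K := ⟨α, β, γ, δ⟩
  have hdet : m.det ≠ 0 := hdet
  choose f hf using fun i => (hmaps i).2
  have hsends : ∀ i, m.Sends (b i) (b (f i)) := fun i =>
    Mobius.sends_iff_div.2 ⟨(hmaps i).1, (hf i).symm⟩
  have hf_inj : Injective f := fun i j hij =>
    hb (Mobius.eq_of_sends_of_sends hdet (hsends i) (hij ▸ hsends j))
  refine ⟨Equiv.ofBijective f hf_inj.bijective_of_finite, fun hσ => ?_, m, hdet, hsends⟩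
  obtain ⟨j, hj⟩ := hmoves
  have hfj : f j = j := congrArg (· j) hσ
  exact hj ((hf j).symm.trans (congrArg b hfj))

theorem two_lt_card_filter_ne_and_apply_ne [Fintype ι] [DecidableEq ι]
    (hι : 5 ≤ Fintype.card ι) (σ : Perm ι) (p : ι) :
    2 < #{i | i ≠ p ∧ σ i ≠ p} := by
  have hsub : univ \ {p, σ⁻¹ p} ⊆ ({i | i ≠ p ∧ σ i ≠ p} : Finset ι) := fun i hi => by
    simp only [mem_sdiff, mem_univ, mem_insert, mem_singleton, not_or, true_and] at hi
    simp only [mem_filter, mem_univ, true_and]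
    exact ⟨hi.1, fun h => hi.2 (by rw [← h]; simp)⟩
  have := card_le_card hsub
  have := le_card_sdiff ({p, σ⁻¹ p} : Finset ι) univ
  have := card_le_two (a := p) (b := σ⁻¹ p)
  rw [card_univ] at *
  omega

theorem eq_one_of_isMobiusPerm_update_of_three [Fintype ι] [DecidableEq ι]
    (hι : 5 ≤ Fintype.card ι) {a : ι → K} {p : ι} {σ : Perm ι} {t₁ t₂ t₃ : K}
    (h12 : t₁ ≠ t₂) (h13 : t₁ ≠ t₃) (h23 : t₂ ≠ t₃)
    (hinj : Injective (update a p t₁)) (h₁ : IsMobiusPerm (update a p t₁) σ)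
    (h₂ : IsMobiusPerm (update a p t₂) σ) (h₃ : IsMobiusPerm (update a p t₃) σ) :
    σ = 1 := by
  obtain ⟨m, hdet, hm⟩ := h₁
  obtain ⟨i₁, i₂, i₃, hi₁, hi₂, hi₃, hi12, hi13, hi23⟩ :=
    two_lt_card_iff.1 (two_lt_card_filter_ne_and_apply_ne hι σ p)
  simp only [mem_filter, mem_univ, true_and] at hi₁ hi₂ hi₃
  have hdist : ∀ {i j}, i ≠ p → j ≠ p → i ≠ j → a i ≠ a j := fun hi hj hij hij' =>
    hij (hinj (by rwa [update_of_ne hi, update_of_ne hj]))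
  -- the symmetry for `t` agrees with `m` at three points away from the moving one
  have hmoving : ∀ {t}, IsMobiusPerm (update a p t) σ → m.Sends t (update a p t (σ p)) := by
    rintro t ⟨m', -, hm'⟩
    have hagree : ∀ {i}, i ≠ p ∧ σ i ≠ p → m.AgreeAt m' (a i) := fun {i} hi => by
      have h := hm i
      have h' := hm' i
      simp only [update_of_ne hi.1, update_of_ne hi.2] at h h'
      exact Mobius.agreeAt_of_sends h h'
    have hagree_all := Mobius.agreeAt_of_three (hdist hi₁.1 hi₂.1 hi12)
      (hdist hi₁.1 hi₃.1 hi13) (hdist hi₂.1 hi₃.1 hi23) (hagree hi₁) (hagree hi₂)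
      (hagree hi₃)
    exact Mobius.sends_of_agreeAt hdet (hagree_all t) (by simpa using hm' p)
  by_cases hp : σ p = p
  · have hfix : ∀ {t}, IsMobiusPerm (update a p t) σ → m.AgreeAt Mobius.id t := fun ht => by
      have h := hmoving ht
      rw [hp, update_self] at h
      exact Mobius.agreeAt_of_sends h (Mobius.sends_id _)
    refine Perm.ext fun j => hinj ?_
    exact Mobius.eq_of_agreeAt (Mobius.agreeAt_of_three h12 h13 h23 (hfix ⟨m, hdet, hm⟩)
      (hfix h₂) (hfix h₃) _) (hm j) (Mobius.sends_id _)
  · have ht₁ := hmoving ⟨m, hdet, hm⟩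
    have ht₂ := hmoving h₂
    rw [update_of_ne hp] at ht₁ ht₂
    exact (h12 (Mobius.eq_of_sends_of_sends hdet ht₁ ht₂)).elim

theorem finite_setOf_isMobiusPerm_update [Fintype ι] [DecidableEq ι] (hι : 5 ≤ Fintype.card ι)
    (a : ι → K) (p : ι) {σ : Perm ι} (hσ : σ ≠ 1) :
    {t | Injective (update a p t) ∧ IsMobiusPerm (update a p t) σ}.Finite := by
  by_contra hinf
  obtain ⟨u, huS, -, hu⟩ := Set.Infinite.exists_subset_ncard_eq hinf 3
  obtain ⟨t₁, t₂, t₃, h12, h13, h23, rfl⟩ := Set.ncard_eq_three.1 hu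
  obtain ⟨hinj, h₁⟩ := huS (by simp : t₁ ∈ _)
  exact hσ (eq_one_of_isMobiusPerm_update_of_three hι h12 h13 h23 hinj h₁
    (huS (by simp : t₂ ∈ _)).2 (huS (by simp : t₃ ∈ _)).2)

end Rigidity

/-- For `r ≥ 3`, the set of `2r`-tuples of pairwise distinct real numbers admitting a
nontrivial Möbius symmetry has empty interior in `ℝ^{2r}` (product topology): a
general set of `2r` distinct points of the real line admits no nontrivial Möbius
symmetry. -/
theorem mobius_symmetric_tuples_empty_interior (r : ℕ) (hr : 3 ≤ r) :
    interior {a : Fin (2 * r) → ℝ | Function.Injective a ∧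
      ∃ α β γ δ : ℝ, α * δ - β * γ ≠ 0 ∧
        (∀ i, γ * a i + δ ≠ 0 ∧ (α * a i + β) / (γ * a i + δ) ∈ Set.range a) ∧
        (∃ j, (α * a j + β) / (γ * a j + δ) ≠ a j)} = ∅ := by
  refine Set.eq_empty_of_forall_notMem fun a ha => ?_
  set p : Fin (2 * r) := ⟨0, by omega⟩
  have hupdate : Continuous fun t : ℝ => update a p t := continuous_const.update p continuous_id
  have hnhds := hupdate.continuousAt.preimage_mem_nhds (x := a p)
    (by rw [update_eq_self]; exact isOpen_interior.mem_nhds ha)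
  refine infinite_of_mem_nhds (a p) (Filter.mem_of_superset hnhds
    (Set.preimage_mono interior_subset)) ?_
  refine ((Set.toFinite {σ : Perm (Fin (2 * r)) | σ ≠ 1}).biUnion fun σ hσ =>
    finite_setOf_isMobiusPerm_update (by rw [Fintype.card_fin]; omega) a p hσ).subset ?_
  rintro t ⟨hinj, α, β, γ, δ, hdet, hmaps, hmoves⟩
  obtain ⟨σ, hσ, hperm⟩ := exists_isMobiusPerm_ne_one hinj hdet hmaps hmoves
  exact Set.mem_biUnion hσ ⟨hinj, hperm⟩
end

section
/- Let a > 1 be a real number and let Q be a real polynomial with Q(0) = 0, Q(1) = 1, Q(a) = 0, and Q(x) > 0 for every x with 0 < x < a. Then there exists a natural number N such that for every n ≥ N and every x ∈ [0, a]: Q(x) = x^{2n} if and only if x = 0 or x = 1. -/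
/-!
Write `Q = X ^ k * R` with `R(0) ≠ 0` and `Q - 1 = (X - 1) * S`. Positivity of `Q` on
`(0, a)` makes `R` positive, hence at least some `m > 0`, on `[0, c]` for any `c < 1`; there
`x ^ (2n) = x ^ k * x ^ (2n - k) < x ^ k * R(x) = Q(x)` as soon as `c ^ (2n - k) < m`.
On `[c, a]`, for `x ≠ 1`, the equation `Q(x) = x ^ (2n)` reads
`S(x) = 1 + x + ⋯ + x ^ (2n - 1)`; the right side is at least the geometric sum at `c`, which
tends to `(1 - c)⁻¹`, and `c` is chosen so close to `1` that this limit exceeds the maximum of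
`S` on `[0, a]`.
-/

open Polynomial Set Filter Topology Finset

namespace Polynomial

lemma exists_eq_X_pow_mul_eval_zero_ne_zero {K : Type*} [CommRing K] {p : K[X]} (hp : p ≠ 0) :
    ∃ (k : ℕ) (q : K[X]), p = X ^ k * q ∧ q.eval 0 ≠ 0 := by
  obtain ⟨q, hpq, hq⟩ := p.exists_eq_pow_rootMultiplicity_mul_and_not_dvd hp 0
  refine ⟨_, q, by simpa using hpq, ?_⟩
  rwa [map_zero, sub_zero, X_dvd_iff, coeff_zero_eq_eval_zero] at hq

lemma eval_ne_pow_of_ne_geom_sum {K : Type*} [CommRing K] [IsDomain K] {p q : K[X]}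
    (hpq : p - 1 = (X - 1) * q) {x : K} (hx : x ≠ 1) {n : ℕ}
    (h : q.eval x ≠ ∑ i ∈ range n, x ^ i) : p.eval x ≠ x ^ n := by
  intro hp
  have hq : (x - 1) * q.eval x = (x - 1) * ∑ i ∈ range n, x ^ i := by
    have := congrArg (eval x) hpq
    rw [eval_sub, eval_mul, eval_sub, eval_X, eval_one, hp] at this
    rw [← this, mul_comm, geom_sum_mul]
  exact h (mul_left_cancel₀ (sub_ne_zero.2 hx) hq)

lemma pow_lt_eval_X_pow_mul {q : ℝ[X]} {k n : ℕ} (hkn : k ≤ n) {x : ℝ} (hx : 0 < x)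
    (h : x ^ (n - k) < q.eval x) : x ^ n < (X ^ k * q).eval x := by
  rw [eval_mul, eval_pow, eval_X, ← pow_mul_pow_sub x hkn]
  exact mul_lt_mul_of_pos_left h (pow_pos hx k)

lemma eval_pos_of_eval_X_pow_mul_pos {q : ℝ[X]} {k : ℕ} {a : ℝ} (ha : 0 < a)
    (hq : q.eval 0 ≠ 0) (hpos : ∀ x, 0 < x → x < a → 0 < (X ^ k * q).eval x)
    {x : ℝ} (hx : 0 ≤ x) (hxa : x < a) : 0 < q.eval x := by
  have hpos' : ∀ x ∈ Ioo 0 a, 0 < q.eval x := fun x ⟨hx, hxa⟩ => by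
    have := hpos x hx hxa
    rw [eval_mul, eval_pow, eval_X] at this
    exact pos_of_mul_pos_right this (pow_pos hx k).le
  rcases hx.eq_or_lt with rfl | hx
  · have hlim : Tendsto q.eval (𝓝[>] 0) (𝓝 (q.eval 0)) :=
      (q.continuous.tendsto 0).mono_left nhdsWithin_le_nhds
    refine hq.symm.lt_of_le (ge_of_tendsto hlim ?_)
    filter_upwards [Ioo_mem_nhdsGT ha] with y hy using (hpos' y hy).le
  · exact hpos' x ⟨hx, hxa⟩

end Polynomial

lemma exists_lt_inv_one_sub (C : ℝ) : ∃ c, 0 ≤ c ∧ c < 1 ∧ C < (1 - c)⁻¹ := by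
  refine ⟨1 - (max C 1 + 1)⁻¹, ?_, ?_, ?_⟩
  · rw [sub_nonneg]; exact inv_le_one_of_one_le₀ (by linarith [le_max_right C 1])
  · rw [sub_lt_self_iff]; positivity
  · rw [sub_sub_cancel, inv_inv]; linarith [le_max_left C 1]

theorem eventually_eval_eq_pow_iff {a : ℝ} (ha : 1 < a) {p : ℝ[X]} (h0 : p.eval 0 = 0)
    (h1 : p.eval 1 = 1) (hpos : ∀ x, 0 < x → x < a → 0 < p.eval x) :
    ∀ᶠ n in atTop, ∀ x ∈ Icc 0 a, (p.eval x = x ^ n ↔ x = 0 ∨ x = 1) := by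
  obtain ⟨q, hq⟩ := X_sub_C_dvd_sub_C_eval (a := 1) (p := p)
  rw [h1, C_1] at hq
  obtain ⟨k, r, hpr, hr0⟩ :=
    exists_eq_X_pow_mul_eval_zero_ne_zero (p := p) (by rintro rfl; simp at h1)
  rw [hpr] at hpos
  obtain ⟨C, hC⟩ :=
    isCompact_Icc.bddAbove_image (f := q.eval) (K := Icc 0 a) q.continuous.continuousOn
  obtain ⟨c, hc0, hc1, hCc⟩ := exists_lt_inv_one_sub C
  obtain ⟨m, hm0, hm⟩ :=
    (isCompact_Icc (a := 0) (b := c)).exists_forall_le' r.continuous.continuousOn fun x hx =>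
      eval_pos_of_eval_X_pow_mul_pos (by linarith) hr0 hpos hx.1 (by linarith [hx.2])
  have hgeom : ∀ᶠ n in atTop, C < ∑ i ∈ range n, c ^ i :=
    (hasSum_geometric_of_lt_one hc0 hc1).tendsto_sum_nat.eventually_const_lt hCc
  have hpow : ∀ᶠ n in atTop, c ^ (n - k) < m :=
    ((tendsto_pow_atTop_nhds_zero_of_lt_one hc0 hc1).comp
      (tendsto_sub_atTop_nat k)).eventually_lt_const hm0
  filter_upwards [eventually_ge_atTop (max k 1), hgeom, hpow] with n hn hgeom hpow x hx
  refine ⟨fun hx_eq => ?_, ?_⟩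
  · by_contra! hne
    rcases lt_or_ge x c with hxc | hcx
    · rw [hpr] at hx_eq
      refine (pow_lt_eval_X_pow_mul (le_of_max_le_left hn) (hx.1.lt_of_ne' hne.1) ?_).ne' hx_eq
      calc x ^ (n - k) ≤ c ^ (n - k) := pow_le_pow_left₀ hx.1 hxc.le _
        _ < m := hpow
        _ ≤ r.eval x := hm x ⟨hx.1, hxc.le⟩
    · refine eval_ne_pow_of_ne_geom_sum hq hne.2 (ne_of_lt ?_) hx_eq
      calc q.eval x ≤ C := hC (mem_image_of_mem _ hx)
        _ < ∑ i ∈ range n, c ^ i := hgeom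
        _ ≤ ∑ i ∈ range n, x ^ i := sum_le_sum fun i _ => pow_le_pow_left₀ hc0 hcx i
  · rintro (rfl | rfl)
    · rw [h0, zero_pow (by omega)]
    · rw [h1, one_pow]

theorem eventually_eq_pow_iff_general (a : ℝ) (ha : 1 < a) (Q : Polynomial ℝ)
    (h0 : Q.eval 0 = 0) (h1 : Q.eval 1 = 1)
    (hpos : ∀ x : ℝ, 0 < x → x < a → 0 < Q.eval x) :
    ∃ N : ℕ, ∀ n : ℕ, N ≤ n → ∀ x ∈ Set.Icc (0 : ℝ) a,
      (Q.eval x = x ^ (2 * n) ↔ x = 0 ∨ x = 1) := by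
  obtain ⟨N, hN⟩ := eventually_atTop.1 (eventually_eval_eq_pow_iff ha h0 h1 hpos)
  exact ⟨N, fun n hn => hN (2 * n) (by omega)⟩

/-- Let `a > 1` and let `Q` be a real polynomial with `Q(0) = 0`, `Q(1) = 1`,
`Q(a) = 0` and `Q > 0` on `(0, a)`. Then for all sufficiently large `n`, the only
solutions of `Q(x) = x^{2n}` in `[0, a]` are `x = 0` and `x = 1`. -/
theorem eventually_eq_pow_iff (a : ℝ) (ha : 1 < a) (Q : Polynomial ℝ)
    (h0 : Q.eval 0 = 0) (h1 : Q.eval 1 = 1) (hA : Q.eval a = 0)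
    (hpos : ∀ x : ℝ, 0 < x → x < a → 0 < Q.eval x) :
    ∃ N : ℕ, ∀ n : ℕ, N ≤ n → ∀ x ∈ Set.Icc (0 : ℝ) a,
      (Q.eval x = x ^ (2 * n) ↔ x = 0 ∨ x = 1) :=
  eventually_eq_pow_iff_general a ha Q h0 h1 hpos
end
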